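/- arXiv:2211.02994 — 2 statements merged into one kernel-verified Lean document; each statement's English description precedes it below -/
import Mathlib

section
/- Let f : [0,∞) → [0,∞) be defined by f(x) = φ(x) if x is rational and f(x) = ψ(x) if x is irrational, where φ(x) = x/2 on [0,4], 3x − 10 on (4,6], (3/2)x − 1 on (6,∞), and ψ(x) = (3/4)x on [0,4], 2x − 5 on (4,6], (5/4)x − 1/2 on (6,∞). Then f is surjective onto [0,∞). -/
noncomputable def phi (x : ℝ) : ℝ :=
  if x ≤ 4 then x / 2 else if x ≤ 6 then 3 * x - 10 else (3 / 2) * x - 1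

noncomputable def psi (x : ℝ) : ℝ :=
  if x ≤ 4 then (3 / 4) * x else if x ≤ 6 then 2 * x - 5 else (5 / 4) * x - 1 / 2

open Classical in
noncomputable def f (x : ℝ) : ℝ :=
  if ∃ q : ℚ, (q : ℝ) = x then phi x else psi x

theorem stmt_10 : Set.SurjOn f (Set.Ici 0) (Set.Ici 0) := by
  intro b hb
  simp only [Set.mem_Ici] at hb
  by_cases hq : ∃ q : ℚ, (q : ℝ) = b
  · obtain ⟨q, hq'⟩ := hq
    rcases le_or_gt b 2 with h1 | h1
    · refine ⟨2 * b, by simp only [Set.mem_Ici]; linarith, ?_⟩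
      have hx : ∃ r : ℚ, (r : ℝ) = 2 * b := ⟨2 * q, by push_cast; rw [hq']⟩
      simp only [f, if_pos hx, phi]
      rw [if_pos (by linarith)]
      ring
    · rcases le_or_gt b 8 with h2 | h2
      · refine ⟨(b + 10) / 3, by simp only [Set.mem_Ici]; linarith, ?_⟩
        have hx : ∃ r : ℚ, (r : ℝ) = (b + 10) / 3 :=
          ⟨(q + 10) / 3, by push_cast; rw [hq']⟩
        simp only [f, if_pos hx, phi]
        rw [if_neg (by linarith), if_pos (by linarith)]
        ring
      · refine ⟨(2 * b + 2) / 3, by simp only [Set.mem_Ici]; linarith, ?_⟩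
        have hx : ∃ r : ℚ, (r : ℝ) = (2 * b + 2) / 3 :=
          ⟨(2 * q + 2) / 3, by push_cast; rw [hq']⟩
        simp only [f, if_pos hx, phi]
        rw [if_neg (by linarith), if_neg (by linarith)]
        ring
  · rcases le_or_gt b 3 with h1 | h1
    · refine ⟨(4 / 3) * b, by simp only [Set.mem_Ici]; linarith, ?_⟩
      have hx : ¬ ∃ r : ℚ, (r : ℝ) = (4 / 3) * b := by
        rintro ⟨r, hr⟩
        exact hq ⟨(3 / 4) * r, by push_cast; rw [hr]; ring⟩
      simp only [f, if_neg hx, psi]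
      rw [if_pos (by linarith)]
      ring
    · rcases le_or_gt b 7 with h2 | h2
      · refine ⟨(b + 5) / 2, by simp only [Set.mem_Ici]; linarith, ?_⟩
        have hx : ¬ ∃ r : ℚ, (r : ℝ) = (b + 5) / 2 := by
          rintro ⟨r, hr⟩
          exact hq ⟨2 * r - 5, by push_cast; rw [hr]; ring⟩
        simp only [f, if_neg hx, psi]
        rw [if_neg (by linarith), if_pos (by linarith)]
        ring
      · refine ⟨(4 * b + 2) / 5, by simp only [Set.mem_Ici]; linarith, ?_⟩
        have hx : ¬ ∃ r : ℚ, (r : ℝ) = (4 * b + 2) / 5 := by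
          rintro ⟨r, hr⟩
          exact hq ⟨(5 * r - 2) / 4, by push_cast; rw [hr]; ring⟩
        simp only [f, if_neg hx, psi]
        rw [if_neg (by linarith), if_neg (by linarith)]
        ring
end

section
/- Let f : [0,∞) → [0,∞) be given by f(x) = φ(x) for rational x and f(x) = ψ(x) for irrational x, with φ, ψ as in Example 2. Then the fixed point set of f is exactly {0, 5}, and f is discontinuous at every point of (0,∞) \ {5}. -/
lemma phi_cont : Continuous phi := by
  have h1 : Continuous fun x : ℝ => if x ≤ 6 then 3 * x - 10 else (3 / 2) * x - 1 := by
    apply Continuous.if_le (by continuity) (by continuity) continuous_id continuous_const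
    intro x hx; subst hx; norm_num
  exact Continuous.if_le (f' := fun x : ℝ => x / 2)
      (g' := fun x : ℝ => if x ≤ 6 then 3 * x - 10 else (3 / 2) * x - 1)
      (by continuity) h1 continuous_id continuous_const (by intro x hx; subst hx; norm_num)

lemma psi_cont : Continuous psi := by
  have h1 : Continuous fun x : ℝ => if x ≤ 6 then 2 * x - 5 else (5 / 4) * x - 1 / 2 := by
    apply Continuous.if_le (by continuity) (by continuity) continuous_id continuous_const
    intro x hx; subst hx; norm_num
  exact Continuous.if_le (f' := fun x : ℝ => (3 / 4) * x)
      (g' := fun x : ℝ => if x ≤ 6 then 2 * x - 5 else (5 / 4) * x - 1 / 2)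
      (by continuity) h1 continuous_id continuous_const (by intro x hx; subst hx; norm_num)

open Filter Topology in
lemma eq_of_contAt {g : ℝ → ℝ} (hg : Continuous g) {S : Set ℝ} (hS : Dense S)
    (hfg : ∀ y ∈ S, f y = g y) {x : ℝ} (hc : ContinuousAt f x) : g x = f x := by
  have hne : (𝓝[S] x).NeBot := by
    rw [← mem_closure_iff_nhdsWithin_neBot, hS.closure_eq]; trivial
  have h1 : Tendsto f (𝓝[S] x) (𝓝 (f x)) := hc.tendsto.mono_left nhdsWithin_le_nhds
  have h2 : Tendsto g (𝓝[S] x) (𝓝 (g x)) := (hg.tendsto x).mono_left nhdsWithin_le_nhds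
  have h3 : Tendsto g (𝓝[S] x) (𝓝 (f x)) := by
    refine h1.congr' ?_
    filter_upwards [self_mem_nhdsWithin] with y hy using (hfg y hy)
  exact tendsto_nhds_unique h2 h3

theorem stmt_11 :
    {x : ℝ | x ∈ Set.Ici (0 : ℝ) ∧ f x = x} = {0, 5} ∧
    ∀ x : ℝ, 0 < x → x ≠ 5 → ¬ContinuousWithinAt f (Set.Ici 0) x := by
  constructor
  · ext x
    simp only [Set.mem_setOf_eq, Set.mem_Ici, Set.mem_insert_iff, Set.mem_singleton_iff]
    constructor
    · rintro ⟨hx0, hfx⟩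
      unfold f at hfx
      by_cases hq : ∃ q : ℚ, (q : ℝ) = x
      · rw [if_pos hq] at hfx
        unfold phi at hfx
        by_cases h4 : x ≤ 4
        · rw [if_pos h4] at hfx; left; linarith
        · rw [if_neg h4] at hfx
          by_cases h6 : x ≤ 6
          · rw [if_pos h6] at hfx; right; linarith
          · rw [if_neg h6] at hfx; linarith
      · rw [if_neg hq] at hfx
        unfold psi at hfx
        exfalso
        by_cases h4 : x ≤ 4
        · rw [if_pos h4] at hfx
          exact hq ⟨0, by push_cast; linarith⟩
        · rw [if_neg h4] at hfx
          by_cases h6 : x ≤ 6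
          · rw [if_pos h6] at hfx
            exact hq ⟨5, by push_cast; linarith⟩
          · rw [if_neg h6] at hfx; linarith
    · rintro (rfl | rfl)
      · refine ⟨le_refl _, ?_⟩
        unfold f
        rw [if_pos ⟨0, by norm_num⟩]
        unfold phi; norm_num
      · refine ⟨by norm_num, ?_⟩
        unfold f
        rw [if_pos ⟨5, by norm_num⟩]
        unfold phi; norm_num
  · intro x hx hx5 hc
    have hmem : Set.Ici (0:ℝ) ∈ nhds x := Ici_mem_nhds hx
    have hca : ContinuousAt f x := hc.continuousAt hmem
    have hphi : phi x = f x := by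
      apply eq_of_contAt phi_cont (S := Set.range ((↑) : ℚ → ℝ))
        Rat.denseRange_cast _ hca
      intro y hy
      obtain ⟨q, hq⟩ := hy
      unfold f
      rw [if_pos ⟨q, hq⟩]
    have hpsi : psi x = f x := by
      apply eq_of_contAt psi_cont (S := {y : ℝ | Irrational y}) dense_irrational _ hca
      intro y hy
      unfold f
      rw [if_neg]
      rintro ⟨q, hq⟩
      exact hy ⟨q, hq⟩
    have heq : phi x = psi x := by rw [hphi, hpsi]
    unfold phi psi at heq
    by_cases h4 : x ≤ 4
    · rw [if_pos h4, if_pos h4] at heq; linarith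
    · rw [if_neg h4, if_neg h4] at heq
      by_cases h6 : x ≤ 6
      · rw [if_pos h6, if_pos h6] at heq
        exact hx5 (by linarith)
      · rw [if_neg h6, if_neg h6] at heq; linarith
end
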